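/- In the setting of the Theorem — (Ω, F, P) a probability space, n ≥ 1, probability mass functions p_1, …, p_n on ℕ with H(p_t) < ∞, for each t an i.i.d. sequence R_t^1, R_t^2, … : Ω → ℕ with common law p_t, p̄ = (1/n) Σ_t p_t, empirical distributions P̂_t^m(r) = (1/m) #{k ≤ m : R_t^k = r} and P̂^m = (1/n) Σ_t P̂_t^m — the following holds for each fixed t ∈ {1,…,n} with probability 1: lim_{m→∞} Σ_r P̂_t^m(r) log(P̂_t^m(r)/P̂^m(r)) = D(p_t ‖ p̄) = Σ_r p_t(r) log(p_t(r)/p̄(r)). -/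

import Mathlib

/-!
By the strong law of large numbers, almost surely `P̂ₜᵐ(r) → pₜ(r)` for every `t` and `r`, hence
`P̂ᵐ(r) → p̄(r)`. To pass to the limit inside the series, note that `P̂ₜᵐ ≤ n P̂ᵐ` and that
`x - y ≤ x log (x / y) ≤ x log n` whenever `0 ≤ x ≤ n y`: the terms of the plug-in divergence
are squeezed between those of `P̂ₜᵐ - P̂ᵐ` and `P̂ₜᵐ log n`, whose sums (`0` and `log n`) converge
to the sums of their limits, so a generalized dominated convergence argument for series applies.
-/

open MeasureTheory ProbabilityTheory Filter Real Finset Topology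

section SeriesConvergence

variable {ι α : Type*} {L : Filter ι}

theorem eventually_lt_tsum_of_le {l F : ι → α → ℝ} {l₀ F₀ : α → ℝ}
    (hlF : ∀ᶠ i in L, ∀ r, l i r ≤ F i r)
    (hl : ∀ᶠ i in L, Summable (l i)) (hF : ∀ᶠ i in L, Summable (F i))
    (hl₀ : Summable l₀) (hF₀ : Summable F₀)
    (hF_lim : ∀ r, Tendsto (F · r) L (𝓝 (F₀ r))) (hl_lim : ∀ r, Tendsto (l · r) L (𝓝 (l₀ r)))
    (hl_tsum : Tendsto (fun i => ∑' r, l i r) L (𝓝 (∑' r, l₀ r)))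
    {a : ℝ} (ha : a < ∑' r, F₀ r) :
    ∀ᶠ i in L, a < ∑' r, F i r := by
  obtain ⟨s, hs⟩ : ∃ s : Finset α, a < ∑' r, l₀ r + ∑ r ∈ s, (F₀ r - l₀ r) := by
    have h := (hF₀.hasSum.sub hl₀.hasSum).const_add (∑' r, l₀ r)
    rw [add_sub_cancel] at h
    exact (h.eventually (eventually_gt_nhds ha)).exists
  have h_lim : Tendsto (fun i => ∑' r, l i r + ∑ r ∈ s, (F i r - l i r)) L
      (𝓝 (∑' r, l₀ r + ∑ r ∈ s, (F₀ r - l₀ r))) :=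
    hl_tsum.add (tendsto_finsetSum s fun r _ => (hF_lim r).sub (hl_lim r))
  filter_upwards [h_lim.eventually (eventually_gt_nhds hs), hlF, hl, hF] with i hi hlFi hli hFi
  calc a < ∑' r, l i r + ∑ r ∈ s, (F i r - l i r) := hi
    _ ≤ ∑' r, l i r + ∑' r, (F i r - l i r) := by
      gcongr
      exact (hFi.sub hli).sum_le_tsum s fun r _ => sub_nonneg.2 (hlFi r)
    _ = ∑' r, F i r := by rw [hFi.tsum_sub hli, add_sub_cancel]

theorem summable_of_le_of_le {l F u : α → ℝ} (hlF : ∀ r, l r ≤ F r) (hFu : ∀ r, F r ≤ u r)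
    (hl : Summable l) (hu : Summable u) : Summable F := by
  have h : Summable (fun r => F r - l r) :=
    (hu.sub hl).of_nonneg_of_le (fun r => sub_nonneg.2 (hlF r)) fun r => by linarith [hFu r]
  simpa using h.add hl

/-- A series version of the generalized dominated convergence theorem. -/
theorem tendsto_tsum_of_le_of_le [L.NeBot] {l F u : ι → α → ℝ} {l₀ F₀ u₀ : α → ℝ}
    (hlF : ∀ᶠ i in L, ∀ r, l i r ≤ F i r) (hFu : ∀ᶠ i in L, ∀ r, F i r ≤ u i r)
    (hl : ∀ᶠ i in L, Summable (l i)) (hu : ∀ᶠ i in L, Summable (u i))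
    (hl₀ : Summable l₀) (hu₀ : Summable u₀)
    (hl_lim : ∀ r, Tendsto (l · r) L (𝓝 (l₀ r))) (hF_lim : ∀ r, Tendsto (F · r) L (𝓝 (F₀ r)))
    (hu_lim : ∀ r, Tendsto (u · r) L (𝓝 (u₀ r)))
    (hl_tsum : Tendsto (fun i => ∑' r, l i r) L (𝓝 (∑' r, l₀ r)))
    (hu_tsum : Tendsto (fun i => ∑' r, u i r) L (𝓝 (∑' r, u₀ r))) :
    Tendsto (fun i => ∑' r, F i r) L (𝓝 (∑' r, F₀ r)) := by
  have hF : ∀ᶠ i in L, Summable (F i) := by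
    filter_upwards [hlF, hFu, hl, hu] with i using summable_of_le_of_le
  have hF₀ : Summable F₀ :=
    summable_of_le_of_le
      (fun r => le_of_tendsto_of_tendsto (hl_lim r) (hF_lim r) (hlF.mono fun _ h => h r))
      (fun r => le_of_tendsto_of_tendsto (hF_lim r) (hu_lim r) (hFu.mono fun _ h => h r)) hl₀ hu₀
  refine tendsto_order.2 ⟨fun a ha => eventually_lt_tsum_of_le hlF hl hF hl₀ hF₀ hF_lim hl_lim
    hl_tsum ha, fun a ha => ?_⟩
  have h := eventually_lt_tsum_of_le (l := fun i r => -u i r) (F := fun i r => -F i r)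
    (hFu.mono fun _ h r => neg_le_neg (h r)) (hu.mono fun _ h => h.neg) (hF.mono fun _ h => h.neg)
    hu₀.neg hF₀.neg (fun r => (hF_lim r).neg) (fun r => (hu_lim r).neg)
    (by simpa only [tsum_neg] using hu_tsum.neg) (a := -a) (by rwa [tsum_neg, neg_lt_neg_iff])
  simpa only [tsum_neg, neg_lt_neg_iff] using h

end SeriesConvergence

section MulLogDiv

variable {x y c : ℝ}

theorem mul_log_div_eq_sub (hy : y ≠ 0) : x * log (x / y) = x * log x - x * log y := by
  rcases eq_or_ne x 0 with rfl | hx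
  · simp
  · rw [log_div hx hy]; ring

theorem sub_le_mul_log_div (hx : 0 ≤ x) (hc : 0 < c) (hxy : x ≤ c * y) :
    x - y ≤ x * log (x / y) := by
  rcases hx.eq_or_lt with rfl | hx
  · simpa using (mul_nonneg_iff_of_pos_left hc).1 hxy
  have hy : 0 < y := pos_of_mul_pos_right (hx.trans_le hxy) hc.le
  calc x - y = x * (1 - (x / y)⁻¹) := by field_simp
    _ ≤ x * log (x / y) :=
      mul_le_mul_of_nonneg_left (one_sub_inv_le_log_of_pos (by positivity)) hx.le

theorem mul_log_div_le (hx : 0 ≤ x) (hc : 0 < c) (hxy : x ≤ c * y) :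
    x * log (x / y) ≤ x * log c := by
  rcases hx.eq_or_lt with rfl | hx
  · simp
  have hy : 0 < y := pos_of_mul_pos_right (hx.trans_le hxy) hc.le
  exact mul_le_mul_of_nonneg_left (log_le_log (by positivity) ((div_le_iff₀ hy).2 hxy)) hx.le

end MulLogDiv

section KLConvergence

variable {ι α : Type*} {L : Filter ι} [L.NeBot]

theorem tendsto_mul_log_div {x y : ι → ℝ} {x₀ y₀ c : ℝ} (hc : 0 < c) (hx : ∀ i, 0 ≤ x i)
    (hxy : ∀ i, x i ≤ c * y i) (hx_lim : Tendsto x L (𝓝 x₀)) (hy_lim : Tendsto y L (𝓝 y₀)) :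
    Tendsto (fun i => x i * log (x i / y i)) L (𝓝 (x₀ * log (x₀ / y₀))) := by
  rcases eq_or_ne y₀ 0 with rfl | hy₀
  · -- `x - y ≤ x log (x / y) ≤ x log c` squeezes the terms to `0`
    have hx₀ : x₀ = 0 := le_antisymm
      (by simpa using le_of_tendsto_of_tendsto' hx_lim (hy_lim.const_mul c) hxy)
      (ge_of_tendsto' hx_lim hx)
    subst hx₀
    have h_lower : Tendsto (fun i => x i - y i) L (𝓝 0) := by simpa using hx_lim.sub hy_lim
    have h_upper : Tendsto (fun i => x i * log c) L (𝓝 0) := by simpa using hx_lim.mul_const (log c)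
    simpa using tendsto_of_tendsto_of_tendsto_of_le_of_le h_lower h_upper
      (fun i => sub_le_mul_log_div (hx i) hc (hxy i)) fun i => mul_log_div_le (hx i) hc (hxy i)
  · rw [mul_log_div_eq_sub hy₀]
    refine (((continuous_mul_log.tendsto x₀).comp hx_lim).sub
      (hx_lim.mul (hy_lim.log hy₀))).congr' ?_
    filter_upwards [hy_lim.eventually_ne hy₀] with i hi
    exact (mul_log_div_eq_sub hi).symm

theorem tendsto_tsum_mul_log_div {q q' : ι → α → ℝ} {p p' : α → ℝ} {c : ℝ} (hc : 0 < c)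
    (hq0 : ∀ i r, 0 ≤ q i r) (hqq' : ∀ i r, q i r ≤ c * q' i r)
    (hq1 : ∀ᶠ i in L, HasSum (q i) 1) (hq'1 : ∀ᶠ i in L, HasSum (q' i) 1)
    (hp1 : HasSum p 1) (hp'1 : HasSum p' 1)
    (hq : ∀ r, Tendsto (q · r) L (𝓝 (p r))) (hq' : ∀ r, Tendsto (q' · r) L (𝓝 (p' r))) :
    Tendsto (fun i => ∑' r, q i r * log (q i r / q' i r)) L (𝓝 (∑' r, p r * log (p r / p' r))) := by
  have hl_tsum : Tendsto (fun i => ∑' r, (q i r - q' i r)) L (𝓝 (∑' r, (p r - p' r))) := by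
    rw [(hp1.sub hp'1).tsum_eq]
    refine tendsto_const_nhds.congr' ?_
    filter_upwards [hq1, hq'1] with i h h' using (h.sub h').tsum_eq.symm
  have hu_tsum : Tendsto (fun i => ∑' r, q i r * log c) L (𝓝 (∑' r, p r * log c)) := by
    rw [(hp1.mul_right (log c)).tsum_eq]
    refine tendsto_const_nhds.congr' ?_
    filter_upwards [hq1] with i h using (h.mul_right (log c)).tsum_eq.symm
  exact tendsto_tsum_of_le_of_le
    (Eventually.of_forall fun i r => sub_le_mul_log_div (hq0 i r) hc (hqq' i r))
    (Eventually.of_forall fun i r => mul_log_div_le (hq0 i r) hc (hqq' i r))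
    (by filter_upwards [hq1, hq'1] with i h h' using (h.sub h').summable)
    (hq1.mono fun i h => h.summable.mul_right (log c))
    (hp1.sub hp'1).summable (hp1.summable.mul_right (log c))
    (fun r => (hq r).sub (hq' r))
    (fun r => tendsto_mul_log_div hc (hq0 · r) (hqq' · r) (hq r) (hq' r))
    (fun r => (hq r).mul_const (log c)) hl_tsum hu_tsum

end KLConvergence

theorem identDistrib_of_measure_preimage_singleton {Ω Ω' β : Type*} [MeasurableSpace Ω]
    [MeasurableSpace Ω'] [MeasurableSpace β] [Countable β] [MeasurableSingletonClass β]
    {μ : Measure Ω} {ν : Measure Ω'} {X : Ω → β} {Y : Ω' → β} (hX : Measurable X)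
    (hY : Measurable Y) (h : ∀ b, μ (X ⁻¹' {b}) = ν (Y ⁻¹' {b})) : IdentDistrib X Y μ ν where
  aemeasurable_fst := hX.aemeasurable
  aemeasurable_snd := hY.aemeasurable
  map_eq := Measure.ext_of_singleton fun b => by
    rw [Measure.map_apply hX (measurableSet_singleton b),
      Measure.map_apply hY (measurableSet_singleton b), h]

section EmpiricalFrequency

variable {β : Type*} [DecidableEq β]

noncomputable def empiricalFreq (Y : ℕ → β) (m : ℕ) (r : β) : ℝ :=
  #{k ∈ range m | Y k = r} / m

theorem empiricalFreq_nonneg (Y : ℕ → β) (m : ℕ) (r : β) : 0 ≤ empiricalFreq Y m r := by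
  unfold empiricalFreq; positivity

theorem hasSum_empiricalFreq (Y : ℕ → β) {m : ℕ} (hm : m ≠ 0) : HasSum (empiricalFreq Y m) 1 := by
  have h_supp : ∀ r ∉ (range m).image Y, empiricalFreq Y m r = 0 := by
    intro r hr
    rw [empiricalFreq, filter_eq_empty_iff.2 fun k hk hkr => hr (mem_image.2 ⟨k, hk, hkr⟩)]
    simp
  have h_total : ∑ r ∈ (range m).image Y, empiricalFreq Y m r = 1 := by
    simp only [empiricalFreq]
    rw [← sum_div, ← Nat.cast_sum, ← card_eq_sum_card_fiberwise fun k hk => mem_image_of_mem Y hk,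
      card_range, div_self (by exact_mod_cast hm)]
  simpa [h_total] using hasSum_sum_of_ne_finset_zero h_supp

theorem ae_tendsto_empiricalFreq {Ω : Type*} [MeasurableSpace Ω] {μ : Measure Ω} [IsFiniteMeasure μ]
    [MeasurableSpace β] [MeasurableSingletonClass β] {Y : ℕ → Ω → β} (hY : ∀ k, Measurable (Y k))
    (hindep : iIndepFun Y μ) (hident : ∀ k, IdentDistrib (Y k) (Y 0) μ μ) (r : β) :
    ∀ᵐ ω ∂μ, Tendsto (fun m => empiricalFreq (Y · ω) m r) atTop (𝓝 (μ.real (Y 0 ⁻¹' {r}))) := by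
  set f : β → ℝ := ({r} : Set β).indicator 1
  have hf : Measurable f := measurable_one.indicator (measurableSet_singleton r)
  have h_slln := strong_law_ae_real (fun k => f ∘ Y k)
    ((integrable_const (1 : ℝ)).indicator ((hY 0) (measurableSet_singleton r)))
    (fun i j hij => (hindep.indepFun hij).comp hf hf) fun k => (hident k).comp hf
  have h_int : ∫ ω, f (Y 0 ω) ∂μ = μ.real (Y 0 ⁻¹' {r}) :=
    integral_indicator_one ((hY 0) (measurableSet_singleton r))
  filter_upwards [h_slln] with ω hω
  rw [← h_int]
  refine hω.congr fun m => ?_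
  simp only [empiricalFreq, Function.comp_apply, f, Set.indicator_apply, Set.mem_singleton_iff,
    Pi.one_apply, sum_boole]

theorem ae_tendsto_empiricalFreq_of_measure_eq {Ω : Type*} [MeasurableSpace Ω] {μ : Measure Ω}
    [IsFiniteMeasure μ] [MeasurableSpace β] [Countable β] [MeasurableSingletonClass β]
    {Y : ℕ → Ω → β} {p : β → ℝ} (hY : ∀ k, Measurable (Y k))
    (hindep : iIndepFun Y μ) (hlaw : ∀ k r, μ (Y k ⁻¹' {r}) = ENNReal.ofReal (p r))
    (hp : ∀ r, 0 ≤ p r) :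
    ∀ᵐ ω ∂μ, ∀ r, Tendsto (fun m => empiricalFreq (Y · ω) m r) atTop (𝓝 (p r)) := by
  have hident : ∀ k, IdentDistrib (Y k) (Y 0) μ μ := fun k =>
    identDistrib_of_measure_preimage_singleton (hY k) (hY 0) fun r => by rw [hlaw, hlaw]
  refine ae_all_iff.2 fun r => ?_
  simpa only [measureReal_def, hlaw, ENNReal.toReal_ofReal (hp r)] using
    ae_tendsto_empiricalFreq hY hindep hident r

end EmpiricalFrequency

section Average

variable {ι α : Type*} [Fintype ι]

theorem hasSum_average [Nonempty ι] {f : ι → α → ℝ} (hf : ∀ i, HasSum (f i) 1) :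
    HasSum (fun r => (1 / Fintype.card ι) * ∑ i, f i r) 1 := by
  have h := (hasSum_sum fun i (_ : i ∈ univ) => hf i).mul_left (1 / (Fintype.card ι : ℝ))
  rwa [sum_const, card_univ, nsmul_one, one_div_mul_cancel (by positivity)] at h

theorem le_card_mul_average {a : ι → ℝ} (ha : ∀ i, 0 ≤ a i) (i : ι) :
    a i ≤ Fintype.card ι * ((1 / Fintype.card ι) * ∑ j, a j) := by
  have : (Fintype.card ι : ℝ) ≠ 0 := Nat.cast_ne_zero.2 (Fintype.card_pos_iff.2 ⟨i⟩).ne'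
  rw [← mul_assoc, mul_one_div_cancel this, one_mul]
  exact single_le_sum (fun j _ => ha j) (mem_univ i)

end Average

theorem plugin_KL_divergence_converges_general
    {Ω : Type*} [MeasurableSpace Ω] (μ : Measure Ω) [IsProbabilityMeasure μ]
    (n : ℕ) (p : Fin n → ℕ → ℝ)
    (hp0 : ∀ t r, 0 ≤ p t r) (hp1 : ∀ t, HasSum (p t) 1)
    (R : Fin n → ℕ → Ω → ℕ) (hmeas : ∀ t k, Measurable (R t k))
    (hindep : ∀ t, iIndepFun (R t) μ)
    (hlaw : ∀ t k r, μ {ω | R t k ω = r} = ENNReal.ofReal (p t r))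
    (pbar : ℕ → ℝ) (hpbar : ∀ r, pbar r = (1 / n) * ∑ t, p t r)
    (Phat_t : Fin n → ℕ → Ω → ℕ → ℝ)
    (hPhat_t : ∀ t m ω r,
      Phat_t t m ω r = (((Finset.range m).filter (fun k => R t k ω = r)).card : ℝ) / m)
    (Phat : ℕ → Ω → ℕ → ℝ)
    (hPhat : ∀ m ω r, Phat m ω r = (1 / n) * ∑ t, Phat_t t m ω r) :
    ∀ t, ∀ᵐ ω ∂μ, Tendsto
      (fun m => ∑' r, Phat_t t m ω r * log (Phat_t t m ω r / Phat m ω r))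
      atTop (nhds (∑' r, p t r * log (p t r / pbar r))) := by
  intro t
  have : Nonempty (Fin n) := ⟨t⟩
  obtain rfl : Phat_t = fun s m ω => empiricalFreq (R s · ω) m := by
    funext s m ω r; exact hPhat_t s m ω r
  obtain rfl : Phat = fun m ω r => (1 / n) * ∑ s, empiricalFreq (R s · ω) m r := by
    funext m ω r; exact hPhat m ω r
  obtain rfl : pbar = fun r => (1 / n) * ∑ s, p s r := funext hpbar
  filter_upwards [ae_all_iff.2 fun s =>
    ae_tendsto_empiricalFreq_of_measure_eq (hmeas s) (hindep s) (hlaw s) (hp0 s)] with ω hω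
  refine tendsto_tsum_mul_log_div (c := n) (by exact_mod_cast t.pos)
    (fun m => empiricalFreq_nonneg _ m)
    (fun m r => by
      simpa only [Fintype.card_fin] using
        le_card_mul_average (fun s => empiricalFreq_nonneg (R s · ω) m r) t)
    ((eventually_ne_atTop 0).mono fun m hm => hasSum_empiricalFreq _ hm)
    ((eventually_ne_atTop 0).mono fun m hm => by
      simpa only [Fintype.card_fin] using hasSum_average fun s => hasSum_empiricalFreq (R s · ω) hm)
    (hp1 t) (by simpa only [Fintype.card_fin] using hasSum_average hp1) (hω t)
    fun r => (tendsto_finsetSum univ fun s _ => hω s r).const_mul _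

/-- Statement 3 of the Theorem: for each fixed `t`, the plug-in Kullback–Leibler
divergence estimate `D̂(Pₜ ‖ P̄)` converges almost surely to `D(pₜ ‖ p̄)`. -/
theorem plugin_KL_divergence_converges
    {Ω : Type*} [MeasurableSpace Ω] (μ : Measure Ω) [IsProbabilityMeasure μ]
    (n : ℕ) (hn : 1 ≤ n) (p : Fin n → ℕ → ℝ)
    (hp0 : ∀ t r, 0 ≤ p t r) (hp1 : ∀ t, HasSum (p t) 1)
    (hH : ∀ t, Summable (fun r => -(p t r) * log (p t r)))
    (R : Fin n → ℕ → Ω → ℕ) (hmeas : ∀ t k, Measurable (R t k))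
    (hindep : ∀ t, iIndepFun (R t) μ)
    (hlaw : ∀ t k r, μ {ω | R t k ω = r} = ENNReal.ofReal (p t r))
    (pbar : ℕ → ℝ) (hpbar : ∀ r, pbar r = (1 / n) * ∑ t, p t r)
    (Phat_t : Fin n → ℕ → Ω → ℕ → ℝ)
    (hPhat_t : ∀ t m ω r,
      Phat_t t m ω r = (((Finset.range m).filter (fun k => R t k ω = r)).card : ℝ) / m)
    (Phat : ℕ → Ω → ℕ → ℝ)
    (hPhat : ∀ m ω r, Phat m ω r = (1 / n) * ∑ t, Phat_t t m ω r) :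
    ∀ t, ∀ᵐ ω ∂μ, Tendsto
      (fun m => ∑' r, Phat_t t m ω r * log (Phat_t t m ω r / Phat m ω r))
      atTop (nhds (∑' r, p t r * log (p t r / pbar r))) :=
  plugin_KL_divergence_converges_general μ n p hp0 hp1 R hmeas hindep hlaw pbar hpbar Phat_t hPhat_t
    Phat hPhat
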